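/- Let N ∈ ℕ, let K : Fin N → Fin N → ℂ be a kernel, let F : Finset (Fin N) → ℂ be an arbitrary coefficient function (independent of z), and define W(z) = ∑_{α ⊆ univ} F(α) · ρ(z, univ \ α), the sum running over all subsets α of Fin N. Fix k ∈ Fin N. Then W is an affine function of z k, and for all s, t ∈ ℂ and z : Fin N → ℂ, W(Function.update z k t) − W(Function.update z k s) = (t − s) · ∑_{α ⊆ univ \ {k}} F(α) · ρ(z^mod, (univ \ {k}) \ α), where z^mod i = z i + K i k. (This is the recursion ∂W_N({u}_N)/∂z_k = a_k · W^{mod}_{N−1}({u}_N / u_k) of the paper, with the modification rule z_i → z_i + φ(u_i, u_k).) -/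

import Mathlib

/-!
`ρ(z, β)` only involves `z j` for `j ∈ β`, so the terms with `k ∈ α` do not depend on `z k`.
When `k ∈ β`, the variable `z k` occurs only in the diagonal entry `(k, k)`, so the determinant
is affine in `z k` with slope the principal minor obtained by deleting `k`. In that minor each
diagonal sum `∑_{l ∈ β, l ≠ j} K j l` misses exactly the term `K j k`, which the modification
`z j ↦ z j + K j k` puts back: the minor is `ρ(z^mod, β \ {k})`.
-/

open Finset

/-- The symmetric-scheme Gaudin determinant: the determinant of the square matrix
indexed by `α` whose `(j,j)` entry is `z j + ∑_{l ∈ α, l ≠ j} K j l` and whose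
`(j,k)` entry for `j ≠ k` is `-(K j k)`. By convention it equals `1` on `α = ∅`. -/
noncomputable def gaudin {N : ℕ} (K : Fin N → Fin N → ℂ) (z : Fin N → ℂ)
    (α : Finset (Fin N)) : ℂ :=
  Matrix.det (Matrix.of fun j k : α =>
    if j = k then z j + ∑ l ∈ α.erase (j : Fin N), K j l else -K (j : Fin N) (k : Fin N))

namespace Matrix

variable {n R : Type*} [Fintype n] [DecidableEq n] [CommRing R]

theorem det_updateRow_single_self (M : Matrix n n R) (i : n) :
    (M.updateRow i (Pi.single i 1)).det = (M.submatrix ((↑) : {j // j ≠ i} → n) (↑)).det := by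
  rw [twoBlockTriangular_det' _ (· = i)]
  · have hone : toSquareBlockProp (M.updateRow i (Pi.single i 1)) (· = i) = 1 := by
      ext ⟨j, rfl⟩ ⟨l, rfl⟩
      simp [toSquareBlockProp_def]
    simp only [hone, det_one, one_mul]
    congr 1
    ext ⟨j, hj⟩ ⟨l, hl⟩
    simp [toSquareBlockProp_def, updateRow_ne hj]
  · rintro j rfl l hl
    rw [updateRow_self, Pi.single_eq_of_ne hl]

theorem det_add_single_self (M : Matrix n n R) (i : n) (c : R) :
    (M + single i i c).det = M.det + c * (M.submatrix ((↑) : {j // j ≠ i} → n) (↑)).det := by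
  have hrow : M + single i i c = M.updateRow i (M i + c • Pi.single i 1) := by
    ext j l
    by_cases hj : j = i
    · subst hj; simp [single_apply, Pi.single_apply, eq_comm]
    · simp [hj, Ne.symm hj]
  rw [hrow, det_updateRow_add, updateRow_eq_self, det_updateRow_smul, det_updateRow_single_self]

end Matrix

def Finset.subtypeNeEquivErase {α : Type*} [DecidableEq α] {s : Finset α} {a : α} (ha : a ∈ s) :
    {x : s // x ≠ ⟨a, ha⟩} ≃ s.erase a where
  toFun x := ⟨x, mem_erase.2 ⟨fun h => x.2 (Subtype.ext h), x.1.2⟩⟩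
  invFun x := ⟨⟨x, mem_of_mem_erase x.2⟩, fun h => (mem_erase.1 x.2).1 (congrArg Subtype.val h)⟩

section Gaudin

variable {N : ℕ} (K : Fin N → Fin N → ℂ)

noncomputable def gaudinMatrix (z : Fin N → ℂ) (β : Finset (Fin N)) : Matrix β β ℂ :=
  Matrix.of fun j l : β =>
    if j = l then z j + ∑ m ∈ β.erase (j : Fin N), K j m else -K (j : Fin N) (l : Fin N)

theorem gaudin_eq_det (z : Fin N → ℂ) (β : Finset (Fin N)) :
    gaudin K z β = (gaudinMatrix K z β).det := rfl

theorem gaudin_congr {z z' : Fin N → ℂ} {β : Finset (Fin N)} (h : ∀ j ∈ β, z j = z' j) :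
    gaudin K z β = gaudin K z' β := by
  simp only [gaudin, h _ (Subtype.prop _)]

theorem gaudin_update_of_notMem (z : Fin N → ℂ) {k : Fin N} (c : ℂ) {β : Finset (Fin N)}
    (hk : k ∉ β) : gaudin K (Function.update z k c) β = gaudin K z β :=
  gaudin_congr K fun _ hj => Function.update_of_ne (ne_of_mem_of_not_mem hj hk) _ _

theorem gaudinMatrix_update_self (z : Fin N → ℂ) {k : Fin N} {β : Finset (Fin N)} (hk : k ∈ β)
    (s t : ℂ) :
    gaudinMatrix K (Function.update z k t) β
      = gaudinMatrix K (Function.update z k s) β + Matrix.single ⟨k, hk⟩ ⟨k, hk⟩ (t - s) := by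
  ext ⟨j, hj⟩ ⟨l, hl⟩
  by_cases hjk : j = k
  · subst hjk
    by_cases hlj : l = j
    · subst hlj
      simp only [gaudinMatrix, Matrix.add_apply, Matrix.of_apply, if_true, Function.update_self,
        Matrix.single_apply_same]
      ring
    · simp [gaudinMatrix, Ne.symm hlj]
  · simp [gaudinMatrix, hjk, Ne.symm hjk]

theorem gaudin_erase (z : Fin N → ℂ) {k : Fin N} {β : Finset (Fin N)} (hk : k ∈ β) :
    gaudin K (fun i => z i + K i k) (β.erase k)
      = ((gaudinMatrix K z β).submatrix ((↑) : {j : β // j ≠ ⟨k, hk⟩} → β) (↑)).det := by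
  rw [gaudin_eq_det, ← Matrix.det_submatrix_equiv_self (subtypeNeEquivErase hk)]
  congr 1
  ext ⟨⟨j, hj⟩, hjk⟩ ⟨⟨l, hl⟩, hlk⟩
  have hjk : j ≠ k := fun h => hjk (Subtype.ext h)
  by_cases hjl : j = l
  · subst hjl
    simp only [gaudinMatrix, subtypeNeEquivErase, Matrix.of_apply, Matrix.submatrix_apply,
      Equiv.coe_fn_mk, if_true]
    -- the diagonal sum over `β.erase j` still contains the term `K j k` that `β.erase k` lost
    rw [← add_sum_erase _ _ (mem_erase.2 ⟨Ne.symm hjk, hk⟩), erase_right_comm, add_assoc]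
  · simp [gaudinMatrix, subtypeNeEquivErase, hjl]

theorem gaudin_update_sub (z : Fin N → ℂ) {k : Fin N} {β : Finset (Fin N)} (hk : k ∈ β)
    (s t : ℂ) :
    gaudin K (Function.update z k t) β - gaudin K (Function.update z k s) β
      = (t - s) * gaudin K (fun i => z i + K i k) (β.erase k) := by
  have hmod : gaudin K (fun i => z i + K i k) (β.erase k)
      = gaudin K (fun i => Function.update z k s i + K i k) (β.erase k) :=
    gaudin_congr K fun j hj => by rw [Function.update_of_ne (ne_of_mem_erase hj)]
  rw [gaudin_eq_det, gaudin_eq_det, gaudinMatrix_update_self K z hk s t,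
    Matrix.det_add_single_self, hmod, gaudin_erase K _ hk, add_sub_cancel_left]

end Gaudin

/-- The recursion relation for `W(z) = ∑_{α ⊆ univ} F(α) · ρ(z, univ \ α)`:
`W` is affine in `z k`, and
`W(update z k t) − W(update z k s)
   = (t − s) · ∑_{α ⊆ univ \ {k}} F(α) · ρ(z^mod, (univ \ {k}) \ α)`,
where `z^mod i = z i + K i k`. -/
theorem gaudin_sum_recursion {N : ℕ} (K : Fin N → Fin N → ℂ)
    (F : Finset (Fin N) → ℂ) (k : Fin N) (s t : ℂ) (z : Fin N → ℂ) :
    (∑ α ∈ (Finset.univ : Finset (Fin N)).powerset,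
        F α * gaudin K (Function.update z k t) (Finset.univ \ α))
      - (∑ α ∈ (Finset.univ : Finset (Fin N)).powerset,
        F α * gaudin K (Function.update z k s) (Finset.univ \ α))
      = (t - s) * ∑ α ∈ ((Finset.univ : Finset (Fin N)) \ {k}).powerset,
          F α * gaudin K (fun i => z i + K i k)
            (((Finset.univ : Finset (Fin N)) \ {k}) \ α) := by
  have hmem : ∀ α : Finset (Fin N), α ∈ (univ \ {k}).powerset ↔ k ∈ univ \ α := by
    simp [subset_sdiff]
  have hvanish : ∀ α ∈ univ.powerset, α ∉ (univ \ {k}).powerset →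
      F α * gaudin K (Function.update z k t) (univ \ α)
        - F α * gaudin K (Function.update z k s) (univ \ α) = 0 := by
    intro α _ hα
    rw [hmem] at hα
    rw [gaudin_update_of_notMem K z t hα, gaudin_update_of_notMem K z s hα, sub_self]
  rw [← sum_sub_distrib, ← sum_subset (powerset_mono.2 sdiff_subset) hvanish, mul_sum]
  refine sum_congr rfl fun α hα => ?_
  rw [← mul_sub, gaudin_update_sub K z ((hmem α).1 hα), erase_eq, sdiff_right_comm, mul_left_comm]
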